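/- Let L be an a×b complex matrix, let K₁ := [[0, L],[0, 0]] and K₂ := [[0, 0],[−Lᴴ, 0]] be the corresponding (a+b)×(a+b) block matrices, let K := K₁ + K₂, and for τ ≥ 0 let Ψ_τ := (I + (τ/2)K₁)(I + τK₂)(I + (τ/2)K₁). If τ‖L‖ ≤ 1, then ‖exp(τK) − Ψ_τ‖ ≤ (1/2) τ³ ‖L‖³. -/

import Mathlib

/-!
Both halves of the splitting are nilpotent of order two, so the leapfrog step is a polynomial:
it agrees with the Taylor polynomial of degree two of `exp (τK)` up to the single cubic term
`(τ³/4) K₁K₂K₁`. The Taylor remainder of `exp (τK)` is dominated by the real remainder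
`e^y - 1 - y - y²/2 ≤ (2/9) y³` at `y = τ‖K‖ ≤ 1`, and since `‖K‖, ‖K₁‖, ‖K₂‖ ≤ ‖L‖`
the error is at most `(2/9 + 1/4) τ³‖L‖³ ≤ (1/2) τ³‖L‖³`.
-/

open Matrix
open scoped Matrix.Norms.L2Operator

/-- One step of the partitioned leapfrog (Störmer–Verlet / Strang splitting) integrator
for `z' = K z` with `K = [[0, L], [−Lᴴ, 0]]`, where `K₁ = [[0, L], [0, 0]]` and
`K₂ = [[0, 0], [−Lᴴ, 0]]`:  `Ψ_τ = (I + (τ/2)K₁)(I + τK₂)(I + (τ/2)K₁)`. -/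
noncomputable def leapfrogStep {a b : ℕ} (L : Matrix (Fin a) (Fin b) ℂ) (τ : ℝ) :
    Matrix (Fin a ⊕ Fin b) (Fin a ⊕ Fin b) ℂ :=
  (1 + ((τ : ℂ) / 2) • Matrix.fromBlocks 0 L 0 0) *
    (1 + (τ : ℂ) • Matrix.fromBlocks 0 0 (-Lᴴ) 0) *
    (1 + ((τ : ℂ) / 2) • Matrix.fromBlocks 0 L 0 0)

open Finset WithLp
open scoped Nat

theorem NormedSpace.norm_exp_sub_sum_range_le {𝕂 𝔸 : Type*} [RCLike 𝕂] [NormedRing 𝔸]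
    [NormedAlgebra 𝕂 𝔸] [CompleteSpace 𝔸] (x : 𝔸) {n : ℕ} (hn : 0 < n) :
    ‖exp x - ∑ k ∈ range n, (k !⁻¹ : 𝕂) • x ^ k‖ ≤
      Real.exp ‖x‖ - ∑ k ∈ range n, ‖x‖ ^ k / k ! := by
  have htail := (hasSum_nat_add_iff' n).mpr (exp_series_hasSum_exp' (𝕂 := 𝕂) x)
  have hreal := (hasSum_nat_add_iff' n).mpr (expSeries_div_hasSum_exp ‖x‖)
  rw [← Real.exp_eq_exp_ℝ] at hreal
  refine htail.norm_le_of_bounded hreal fun k => ?_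
  rw [norm_smul, norm_inv, RCLike.norm_natCast, inv_mul_eq_div]
  gcongr
  exact norm_pow_le' x (by omega)

theorem Real.exp_sub_sum_range_three_le {y : ℝ} (h0 : 0 ≤ y) (h1 : y ≤ 1) :
    Real.exp y - ∑ k ∈ range 3, y ^ k / k ! ≤ 2 / 9 * y ^ 3 := by
  have := Real.exp_bound' h0 h1 (n := 3) (by norm_num)
  norm_num [Nat.factorial] at this ⊢
  linarith

theorem EuclideanSpace.norm_sq_eq_sum_inl_inr {𝕜 m n : Type*} [RCLike 𝕜] [Fintype m] [Fintype n]
    (y : EuclideanSpace 𝕜 (m ⊕ n)) :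
    ‖y‖ ^ 2 = ‖toLp 2 (y.ofLp ∘ Sum.inl)‖ ^ 2 + ‖toLp 2 (y.ofLp ∘ Sum.inr)‖ ^ 2 := by
  simp only [EuclideanSpace.norm_sq_eq, Fintype.sum_sum_type, Function.comp_apply]

theorem Matrix.l2_opNorm_fromBlocks_antidiag_le {𝕜 m n : Type*} [RCLike 𝕜] [Fintype m]
    [Fintype n] [DecidableEq m] [DecidableEq n] (B : Matrix m n 𝕜) (C : Matrix n m 𝕜) :
    ‖fromBlocks 0 B C 0‖ ≤ max ‖B‖ ‖C‖ := by
  rw [← l2_opNorm_toEuclideanCLM]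
  refine ContinuousLinearMap.opNorm_le_bound _ (by positivity) fun x ↦ ?_
  set x₁ : EuclideanSpace 𝕜 m := toLp 2 (x.ofLp ∘ Sum.inl)
  set x₂ : EuclideanSpace 𝕜 n := toLp 2 (x.ofLp ∘ Sum.inr)
  have hB : ‖toLp 2 (B *ᵥ x₂)‖ ≤ max ‖B‖ ‖C‖ * ‖x₂‖ :=
    (l2_opNorm_mulVec B x₂).trans (by gcongr; exact le_max_left _ _)
  have hC : ‖toLp 2 (C *ᵥ x₁)‖ ≤ max ‖B‖ ‖C‖ * ‖x₁‖ :=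
    (l2_opNorm_mulVec C x₁).trans (by gcongr; exact le_max_right _ _)
  refine (sq_le_sq₀ (by positivity) (by positivity)).mp ?_
  rw [EuclideanSpace.norm_sq_eq_sum_inl_inr, mul_pow, EuclideanSpace.norm_sq_eq_sum_inl_inr x]
  simp only [ofLp_toEuclideanCLM, fromBlocks_mulVec, zero_mulVec, zero_add, add_zero,
    Sum.elim_comp_inl, Sum.elim_comp_inr]
  calc _ ≤ (max ‖B‖ ‖C‖ * ‖x₂‖) ^ 2 + (max ‖B‖ ‖C‖ * ‖x₁‖) ^ 2 := by gcongr
    _ = _ := by ring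

theorem strang_product_eq_taylor_add_of_sq_eq_zero {𝕜 R : Type*} [Field 𝕜] [NeZero (2 : 𝕜)]
    [Ring R] [Algebra 𝕜 R] {X Y : R} (hX : X * X = 0) (hY : Y * Y = 0) (t : 𝕜) :
    (1 + (t / 2) • X) * (1 + t • Y) * (1 + (t / 2) • X) =
      ∑ k ∈ range 3, (k !⁻¹ : 𝕜) • (t • (X + Y)) ^ k + (t ^ 3 / 4) • (X * Y * X) := by
  simp only [sum_range_succ, sum_range_zero, pow_succ, pow_zero, smul_add, add_mul, mul_add,
    smul_mul_assoc, mul_smul_comm, smul_smul, one_mul, mul_one, hX, hY, smul_zero, add_zero,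
    zero_add]
  have h4 : (4 : 𝕜) ≠ 0 := by
    rw [show (4 : 𝕜) = 2 * 2 by norm_num]
    exact mul_ne_zero two_ne_zero two_ne_zero
  norm_num [Nat.factorial]
  match_scalars <;> field_simp <;> ring

/-- **One-step local error of the leapfrog integrator.** If `τ ≥ 0` and `τ ‖L‖ ≤ 1`, then
`‖exp(τ K) − Ψ_τ‖ ≤ (1/2) τ³ ‖L‖³`, where `K = [[0, L], [−Lᴴ, 0]] = K₁ + K₂`. -/
theorem leapfrogStep_local_error {a b : ℕ} (L : Matrix (Fin a) (Fin b) ℂ)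
    (τ : ℝ) (hτ : 0 ≤ τ) (hτL : τ * ‖L‖ ≤ 1) :
    ‖NormedSpace.exp ((τ : ℂ) • (Matrix.fromBlocks 0 L 0 0 + Matrix.fromBlocks 0 0 (-Lᴴ) 0))
        - leapfrogStep L τ‖ ≤ 1 / 2 * τ ^ 3 * ‖L‖ ^ 3 := by
  set K₁ : Matrix (Fin a ⊕ Fin b) (Fin a ⊕ Fin b) ℂ := fromBlocks 0 L 0 0
  set K₂ : Matrix (Fin a ⊕ Fin b) (Fin a ⊕ Fin b) ℂ := fromBlocks 0 0 (-Lᴴ) 0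
  have hK₁ : ‖K₁‖ ≤ ‖L‖ := by simpa using l2_opNorm_fromBlocks_antidiag_le L 0
  have hK₂ : ‖K₂‖ ≤ ‖L‖ := by
    simpa [l2_opNorm_conjTranspose] using l2_opNorm_fromBlocks_antidiag_le 0 (-Lᴴ)
  have hK : ‖K₁ + K₂‖ ≤ ‖L‖ := by
    simpa [K₁, K₂, fromBlocks_add, l2_opNorm_conjTranspose]
      using l2_opNorm_fromBlocks_antidiag_le L (-Lᴴ)
  have hτ' : ‖(τ : ℂ)‖ = τ := by simp [abs_of_nonneg hτ]
  have hτK : ‖(τ : ℂ) • (K₁ + K₂)‖ ≤ τ * ‖L‖ := by rw [norm_smul, hτ']; gcongr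
  have hcubic : ‖((τ : ℂ) ^ 3 / 4) • (K₁ * K₂ * K₁)‖ ≤ 1 / 4 * τ ^ 3 * ‖L‖ ^ 3 :=
    calc _ = τ ^ 3 / 4 * ‖K₁ * K₂ * K₁‖ := by rw [norm_smul, norm_div, norm_pow, hτ']; norm_num
      _ ≤ τ ^ 3 / 4 * (‖L‖ * ‖L‖ * ‖L‖) := by gcongr; exact norm_mul₃_le.trans (by gcongr)
      _ = _ := by ring
  rw [leapfrogStep, strang_product_eq_taylor_add_of_sq_eq_zero
    (by simp [fromBlocks_multiply]) (by simp [fromBlocks_multiply]), ← sub_sub]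
  calc _ ≤ ‖NormedSpace.exp ((τ : ℂ) • (K₁ + K₂)) -
          ∑ k ∈ range 3, (k !⁻¹ : ℂ) • ((τ : ℂ) • (K₁ + K₂)) ^ k‖ + 1 / 4 * τ ^ 3 * ‖L‖ ^ 3 :=
        (norm_sub_le _ _).trans (by gcongr)
    _ ≤ 2 / 9 * (τ * ‖L‖) ^ 3 + 1 / 4 * τ ^ 3 * ‖L‖ ^ 3 := by
        grw [NormedSpace.norm_exp_sub_sum_range_le _ three_pos,
          Real.exp_sub_sum_range_three_le (norm_nonneg _) (hτK.trans hτL), hτK]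
    _ ≤ 1 / 2 * τ ^ 3 * ‖L‖ ^ 3 := by
        rw [mul_pow]
        linarith [mul_nonneg (pow_nonneg hτ 3) (pow_nonneg (norm_nonneg L) 3)]
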